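/- If there exists a continuum which has surjective semispan zero and is not chainable, then there exists a metrizable continuum which has surjective semispan zero and is not chainable. -/

import Mathlib

/-- A continuum `X` is chainable if every finite open cover has a finite open
refinement that can be enumerated as `V_0, …, V_{n-1}` with
`V_i ∩ V_j ≠ ∅` iff `|i - j| ≤ 1`. -/
def Chainable (X : Type*) [TopologicalSpace X] : Prop :=
  ∀ U : Finset (Set X), (∀ u ∈ U, IsOpen u) → ⋃₀ (U : Set (Set X)) = Set.univ →
    ∃ (n : ℕ) (V : Fin n → Set X),
      (∀ i, IsOpen (V i)) ∧ (⋃ i, V i) = Set.univ ∧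
      (∀ i, ∃ u ∈ U, V i ⊆ u) ∧
      ∀ i j : Fin n, (V i ∩ V j).Nonempty ↔ |((i : ℕ) : ℤ) - ((j : ℕ) : ℤ)| ≤ 1

/-- A continuum has surjective semispan zero if every subcontinuum `Z` of `X × X`
with `π₂[Z] = X` meets the diagonal. -/
def SurjectiveSemispanZero (X : Type*) [TopologicalSpace X] : Prop :=
  ∀ Z : Set (X × X), IsClosed Z → IsConnected Z →
    Prod.snd '' Z = Set.univ → ∃ x : X, (x, x) ∈ Z

/-!
A continuous map `φ` from `X` into the Hilbert cube has a metrizable continuum `φ[X]` as image,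
and a chain cover of `φ[X]` pulls back to one of `X`; so it suffices to find `φ` fine enough to
see a cover of `X` without chain refinement and with `φ[X]` of surjective semispan zero.

Fix a closed set `B` of pairs of points of the cube far from the diagonal. If every refinement
`ψ` of a map `φ` admitted a connected set inside `(ψ × ψ)[(φ × φ)⁻¹ B]` projecting onto `ψ[X]`,
the Kuratowski upper limit, along an ultrafilter finer than the refinement order, of the preimages
of these sets in `X × X` would be a subcontinuum of `X × X` projecting onto `X` and missing the
diagonal. So some refinement of `φ` excludes such sets for `B`. Doing this for a countable family
of sets `B` and iterating `ω` times produces the required `φ`.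
-/

open Function Set Filter Topology

abbrev HilbertCube : Type := ℕ → unitInterval

namespace HilbertCube

def block (k : ℕ) (h : HilbertCube) : HilbertCube := fun j => h (Nat.pair k j)

@[fun_prop]
theorem continuous_block (k : ℕ) : Continuous (block k) :=
  continuous_pi fun _ => continuous_apply _

theorem eq_of_forall_block_eq {a b : HilbertCube} (h : ∀ k, block k a = block k b) : a = b := by
  funext j
  simpa [block] using congrFun (h (Nat.unpair j).1) (Nat.unpair j).2

def farPairs (m : ℕ) : Set (HilbertCube × HilbertCube) :=
  {p | ∃ j ≤ m, ((m : ℝ) + 1)⁻¹ ≤ dist (p.1 j) (p.2 j)}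

theorem isClosed_farPairs (m : ℕ) : IsClosed (farPairs m) := by
  have : farPairs m = ⋃ j ∈ Iic m, {p | ((m : ℝ) + 1)⁻¹ ≤ dist (p.1 j) (p.2 j)} := by
    ext; simp [farPairs]
  rw [this]
  exact (finite_Iic m).isClosed_biUnion fun j _ =>
    isClosed_le continuous_const (by fun_prop)

theorem ne_of_mem_farPairs {m : ℕ} {p : HilbertCube × HilbertCube} (hp : p ∈ farPairs m) :
    p.1 ≠ p.2 := by
  obtain ⟨j, -, hj⟩ := hp
  intro h
  rw [h, dist_self] at hj
  exact (inv_pos.mpr (by positivity : (0 : ℝ) < m + 1)).not_ge hj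

theorem _root_.IsCompact.exists_subset_farPairs {K : Set (HilbertCube × HilbertCube)}
    (hK : IsCompact K) (hKd : ∀ p ∈ K, p.1 ≠ p.2) : ∃ m, K ⊆ farPairs m := by
  let O : ℕ → Set (HilbertCube × HilbertCube) :=
    fun m => {p | ∃ j ≤ m, ((m : ℝ) + 1)⁻¹ < dist (p.1 j) (p.2 j)}
  have hO : ∀ m, IsOpen (O m) := fun m => by
    have : O m = ⋃ j ∈ Iic m, {p | ((m : ℝ) + 1)⁻¹ < dist (p.1 j) (p.2 j)} := by
      ext; simp [O]
    rw [this]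
    exact isOpen_biUnion fun j _ => isOpen_lt continuous_const (by fun_prop)
  have hOmono : Monotone O := by
    rintro m m' hmm' p ⟨j, hjm, hj⟩
    refine ⟨j, hjm.trans hmm', lt_of_le_of_lt ?_ hj⟩
    gcongr
  have hKO : K ⊆ ⋃ m, O m := by
    intro p hp
    obtain ⟨j, hj⟩ := Function.ne_iff.mp (hKd p hp)
    obtain ⟨m, hm⟩ := exists_nat_one_div_lt (dist_pos.mpr hj)
    refine mem_iUnion.mpr ⟨max j m, j, le_max_left _ _, lt_of_le_of_lt ?_ hm⟩
    rw [one_div]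
    gcongr
    exact le_max_right _ _
  obtain ⟨m, hm⟩ := hK.elim_directed_cover O hO hKO hOmono.directed_le
  exact ⟨m, hm.trans fun p ⟨j, hjm, hj⟩ => ⟨j, hjm, hj.le⟩⟩

end HilbertCube

theorem Function.FactorsThrough.prodMap {α β γ α' β' γ' : Type*} {f : α → γ} {g : α → β}
    {f' : α' → γ'} {g' : α' → β'} (h : FactorsThrough f g) (h' : FactorsThrough f' g') :
    FactorsThrough (Prod.map f f') (Prod.map g g') := fun _ _ hab =>
  Prod.ext (h (congrArg Prod.fst hab)) (h' (congrArg Prod.snd hab))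

/-- Up to equivalence, cube maps are the metrizable quotients of `X`. -/
structure CubeMap (X : Type*) [TopologicalSpace X] where
  toFun : X → HilbertCube
  continuous : Continuous toFun

attribute [fun_prop] CubeMap.continuous

namespace CubeMap

variable {X : Type*} [TopologicalSpace X]

instance : CoeFun (CubeMap X) fun _ => X → HilbertCube := ⟨toFun⟩

instance : Preorder (CubeMap X) where
  le φ ψ := FactorsThrough φ ψ
  le_refl _ _ _ := id
  le_trans _ _ _ h₁ h₂ _ _ h := h₁ (h₂ h)

instance : Nonempty (CubeMap X) := ⟨⟨fun _ _ => 0, continuous_const⟩⟩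

def combine (φ : ℕ → CubeMap X) : CubeMap X :=
  ⟨fun x j => φ (Nat.unpair j).1 x (Nat.unpair j).2,
    continuous_pi fun _ => (continuous_apply _).comp (φ _).continuous⟩

@[simp]
theorem block_combine (φ : ℕ → CubeMap X) (k : ℕ) (x : X) :
    HilbertCube.block k (combine φ x) = φ k x := by
  funext j
  simp [HilbertCube.block, combine]

theorem le_combine (φ : ℕ → CubeMap X) (k : ℕ) : φ k ≤ combine φ := fun x y h => by
  simpa using congrArg (HilbertCube.block k) h

instance : IsDirectedOrder (CubeMap X) where
  directed φ ψ := ⟨combine fun n => if n = 0 then φ else ψ,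
    by simpa using le_combine (fun n => if n = 0 then φ else ψ) 0,
    by simpa using le_combine (fun n => if n = 0 then φ else ψ) 1⟩

theorem exists_prodMap_ne [CompletelyRegularSpace X] [T1Space X] {a b : X × X} (hab : a ≠ b) :
    ∃ χ : CubeMap X, Prod.map χ χ a ≠ Prod.map χ χ b := by
  have hsep : ∀ {c d : X}, c ≠ d → ∃ χ : CubeMap X, χ c ≠ χ d := fun {c d} hcd => by
    obtain ⟨f, hf, hfc, hfd⟩ := CompletelyRegularSpace.completely_regular c {d}
      isClosed_singleton hcd
    refine ⟨⟨fun x _ => f x, continuous_pi fun _ => hf⟩, fun h => ?_⟩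
    have := congrFun h 0
    simp only [hfc, hfd rfl] at this
    exact zero_ne_one this
  obtain h | h : a.1 ≠ b.1 ∨ a.2 ≠ b.2 := by
    by_contra! h
    exact hab (Prod.ext h.1 h.2)
  · obtain ⟨χ, hχ⟩ := hsep h
    exact ⟨χ, fun e => hχ (congrArg Prod.fst e)⟩
  · obtain ⟨χ, hχ⟩ := hsep h
    exact ⟨χ, fun e => hχ (congrArg Prod.snd e)⟩

/-- Points identified by every cube map are equal, so by compactness disjoint compacta
already have disjoint images under a single one. -/
theorem exists_disjoint_image_prodMap [CompactSpace X] [T2Space X] {A₁ A₂ : Set (X × X)}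
    (h₁ : IsClosed A₁) (h₂ : IsClosed A₂) (hA : Disjoint A₁ A₂) :
    ∃ χ : CubeMap X, Disjoint (Prod.map χ χ '' A₁) (Prod.map χ χ '' A₂) := by
  by_contra! h
  let E : CubeMap X → Set ((X × X) × (X × X)) :=
    fun χ => A₁ ×ˢ A₂ ∩ {q | Prod.map χ χ q.1 = Prod.map χ χ q.2}
  have hEcl : ∀ χ, IsClosed (E χ) := fun χ =>
    (h₁.prod h₂).inter (isClosed_eq (by fun_prop) (by fun_prop))
  obtain ⟨q, hq⟩ := IsCompact.nonempty_iInter_of_directed_nonempty_isCompact_isClosed E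
    (directed_of_isDirected_le fun ψ χ hle q hq => ⟨hq.1, (hle.prodMap hle) hq.2⟩)
    (fun χ => by
      obtain ⟨_, ⟨a, ha, rfl⟩, b, hb, hab⟩ := not_disjoint_iff.mp (h χ)
      exact ⟨(a, b), ⟨ha, hb⟩, hab.symm⟩)
    (fun χ => (hEcl χ).isCompact) hEcl
  simp only [E, mem_iInter, mem_inter_iff, mem_prod, mem_ofPred_eq] at hq
  have hne : q.1 ≠ q.2 := fun e =>
    disjoint_left.mp hA (hq (Classical.arbitrary _)).1.1 (e ▸ (hq (Classical.arbitrary _)).1.2)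
  obtain ⟨χ, hχ⟩ := exists_prodMap_ne hne
  exact hχ (hq χ).2

end CubeMap

section Factor

variable {α β γ : Type*} [TopologicalSpace α] [TopologicalSpace β] [TopologicalSpace γ]
  [CompactSpace α] [T2Space β] {f : α → β} {g : α → γ}

theorem exists_continuous_comp_rangeFactorization (hf : Continuous f) (hg : Continuous g)
    (hgf : FactorsThrough g f) :
    ∃ k : range f → γ, Continuous k ∧ k ∘ rangeFactorization f = g := by
  let F : C(α, range f) := ⟨rangeFactorization f, hf.subtype_mk _⟩
  have hF : IsQuotientMap F :=
    F.continuous.isClosedMap.isQuotientMap F.continuous rangeFactorization_surjective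
  have hgF : FactorsThrough g F := fun _ _ h => hgf (congrArg Subtype.val h)
  exact ⟨hF.lift ⟨g, hg⟩ hgF, (hF.lift ⟨g, hg⟩ hgF).continuous,
    congrArg DFunLike.coe (hF.lift_comp ⟨g, hg⟩ hgF)⟩

theorem IsPreconnected.image_preimage_of_factorsThrough (hf : Continuous f) (hg : Continuous g)
    (hgf : FactorsThrough g f) {C : Set β} (hC : IsPreconnected C) (hCf : C ⊆ range f) :
    IsPreconnected (g '' (f ⁻¹' C)) := by
  obtain ⟨k, hk, hkf⟩ := exists_continuous_comp_rangeFactorization hf hg hgf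
  have hC' : IsPreconnected (Subtype.val ⁻¹' C : Set (range f)) := by
    rw [← IsInducing.subtypeVal.isPreconnected_image, Subtype.image_preimage_coe,
      inter_eq_right.mpr hCf]
    exact hC
  have hfC : rangeFactorization f '' (f ⁻¹' C) = Subtype.val ⁻¹' C :=
    image_preimage_eq (Subtype.val ⁻¹' C) rangeFactorization_surjective
  rw [← hkf, image_comp, hfC]
  exact hC'.image k hk.continuousOn

end Factor

section UpperLimit

variable {ι α : Type*} [TopologicalSpace α]

def upperLimit (U : Ultrafilter ι) (F : ι → Set α) : Set α :=
  {y | ∀ V ∈ 𝓝 y, ∀ᶠ i in U, (F i ∩ V).Nonempty}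

variable (U : Ultrafilter ι) {F : ι → Set α}

theorem isClosed_upperLimit : IsClosed (upperLimit U F) := by
  refine isOpen_compl_iff.mp (isOpen_iff_mem_nhds.mpr fun y hy => ?_)
  simp only [upperLimit, mem_compl_iff, mem_ofPred_eq, not_forall] at hy
  obtain ⟨V, hV, hVF⟩ := hy
  filter_upwards [eventually_mem_nhds_iff.mpr hV] with z hz hzF using hVF (hzF V hz)

theorem upperLimit_subset {K : Set α} (hK : IsClosed K) (h : ∀ᶠ i in U, F i ⊆ K) :
    upperLimit U F ⊆ K := fun y hy => by
  by_contra hyK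
  obtain ⟨i, hiK, x, hxF, hxK⟩ := (h.and (hy Kᶜ (hK.isOpen_compl.mem_nhds hyK))).exists
  exact hxK (hiK hxF)

theorem upperLimit_inter_nonempty {K : Set α} (hK : IsCompact K)
    (h : ∀ᶠ i in U, (F i ∩ K).Nonempty) : (upperLimit U F ∩ K).Nonempty := by
  classical
  obtain ⟨_, x₀, -⟩ := h.exists
  let x : ι → α := fun i => if hi : (F i ∩ K).Nonempty then hi.some else x₀
  have hx : ∀ᶠ i in U, x i ∈ F i ∩ K := h.mono fun i hi => by
    simpa only [x, dif_pos hi] using hi.some_mem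
  obtain ⟨y, hyK, hy⟩ := hK.ultrafilter_le_nhds (U.map x)
    (le_principal_iff.mpr (hx.mono fun _ hi => hi.2))
  refine ⟨y, fun V hV => ?_, hyK⟩
  filter_upwards [hx, hy hV] with i hi hiV using ⟨x i, hi.1, hiV⟩

theorem eventually_subset_of_upperLimit_subset [CompactSpace α] {O : Set α} (hO : IsOpen O)
    (h : upperLimit U F ⊆ O) : ∀ᶠ i in U, F i ⊆ O := by
  by_contra hF
  obtain ⟨y, hy, hyO⟩ := upperLimit_inter_nonempty U hO.isClosed_compl.isCompact
    ((U.eventually_not.mpr hF).mono fun _ hi => not_subset.mp hi)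
  exact hyO (h hy)

end UpperLimit

section Killing

variable {X : Type*} [TopologicalSpace X] [CompactSpace X] [T2Space X]

/-- Two disjoint closed pieces of the upper limit are already separated by a single cube map,
and eventually the image of the family under that map is preconnected. -/
theorem isPreconnected_upperLimit {ι : Type*} (U : Ultrafilter ι) (K : ι → Set (X × X))
    (hK : ∀ χ : CubeMap X, ∀ᶠ i in U, IsPreconnected (Prod.map χ χ '' K i)) :
    IsPreconnected (upperLimit U K) := by
  set L := upperLimit U K
  rw [isPreconnected_iff_subset_of_fully_disjoint_closed (isClosed_upperLimit U)]
  intro F₁ F₂ hF₁ hF₂ hLF hF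
  by_contra! h
  obtain ⟨a₂, ha₂L, ha₂⟩ := not_subset.mp h.1
  obtain ⟨a₁, ha₁L, ha₁⟩ := not_subset.mp h.2
  have hL : IsClosed L := isClosed_upperLimit U
  obtain ⟨χ, hχ⟩ := CubeMap.exists_disjoint_image_prodMap (hL.inter hF₁) (hL.inter hF₂)
    (hF.mono inter_subset_right inter_subset_right)
  have hχc : Continuous (Prod.map χ χ) := by fun_prop
  obtain ⟨W₁, W₂, hW₁, hW₂, hA₁W, hA₂W, hW⟩ := SeparatedNhds.of_isCompact_isCompact
    ((hL.inter hF₁).isCompact.image hχc) ((hL.inter hF₂).isCompact.image hχc) hχ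
  have hLW : L ⊆ Prod.map χ χ ⁻¹' (W₁ ∪ W₂) := fun y hy =>
    (hLF hy).imp (fun hy₁ => hA₁W ⟨y, ⟨hy, hy₁⟩, rfl⟩) (fun hy₂ => hA₂W ⟨y, ⟨hy, hy₂⟩, rfl⟩)
  have hmeets : ∀ {a} {W : Set (HilbertCube × HilbertCube)}, a ∈ L → IsOpen W →
      Prod.map χ χ a ∈ W → ∀ᶠ i in U, (Prod.map χ χ '' K i ∩ W).Nonempty :=
    fun ha hW haW => (ha _ ((hW.preimage hχc).mem_nhds haW)).mono
      fun _ ⟨p, hpK, hpW⟩ => ⟨_, mem_image_of_mem _ hpK, hpW⟩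
  obtain ⟨i, hi, hiW, hi₁, hi₂⟩ := ((hK χ).and
    ((eventually_subset_of_upperLimit_subset U ((hW₁.union hW₂).preimage hχc) hLW).and
    ((hmeets ha₁L hW₁ (hA₁W ⟨a₁, ⟨ha₁L, (hLF ha₁L).resolve_right ha₁⟩, rfl⟩)).and
    (hmeets ha₂L hW₂ (hA₂W ⟨a₂, ⟨ha₂L, (hLF ha₂L).resolve_left ha₂⟩, rfl⟩))))).exists
  obtain ⟨_, -, hz⟩ := hi W₁ W₂ hW₁ hW₂ (image_subset_iff.mpr hiW) hi₁ hi₂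
  exact disjoint_left.mp hW hz.1 hz.2

def HasSpanningConnectedSet (ψ : X → HilbertCube) (A : Set (X × X)) : Prop :=
  ∃ C : Set (HilbertCube × HilbertCube), IsConnected C ∧
    C ⊆ Prod.map ψ ψ '' A ∧ Prod.snd '' C = range ψ

theorem exists_le_not_hasSpanningConnectedSet [Nonempty X] (hX : SurjectiveSemispanZero X)
    (φ : CubeMap X) {B : Set (HilbertCube × HilbertCube)} (hB : IsClosed B)
    (hBd : ∀ p ∈ B, p.1 ≠ p.2) :
    ∃ ψ : CubeMap X, φ ≤ ψ ∧ ¬HasSpanningConnectedSet ψ (Prod.map φ φ ⁻¹' B) := by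
  by_contra! h
  choose! C hCconn hCA hCsnd using h
  let U := Ultrafilter.of (atTop : Filter (CubeMap X))
  have hU : ∀ ψ : CubeMap X, ∀ᶠ χ in U, ψ ≤ χ := fun ψ =>
    Ultrafilter.of_le _ (eventually_ge_atTop ψ)
  let K : CubeMap X → Set (X × X) := fun χ => Prod.map χ χ ⁻¹' C χ
  have hLB : upperLimit U K ⊆ Prod.map φ φ ⁻¹' B := by
    refine upperLimit_subset U (hB.preimage (by fun_prop)) ((hU φ).mono fun χ hχ p hp => ?_)
    obtain ⟨a, haB, ha⟩ := hCA χ hχ hp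
    exact (congrArg (· ∈ B) ((hχ.prodMap hχ) ha)).mp haB
  have hLsnd : ∀ x, ∃ w, (w, x) ∈ upperLimit U K := fun x => by
    obtain ⟨p, hpL, -, hpx⟩ := upperLimit_inter_nonempty U (F := K)
      (isCompact_univ.prod isCompact_singleton)
      ((hU φ).mono fun χ hχ => by
        have hx : χ x ∈ Prod.snd '' C χ := (hCsnd χ hχ).symm ▸ mem_range_self x
        obtain ⟨⟨_, _⟩, hc, rfl⟩ := hx
        obtain ⟨⟨w, w'⟩, -, hw⟩ := hCA χ hχ hc
        obtain ⟨rfl, -⟩ := Prod.ext_iff.mp hw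
        exact ⟨(w, x), hc, mem_univ _, rfl⟩)
    exact ⟨p.1, by rwa [← mem_singleton_iff.mp hpx]⟩
  have hLconn : IsConnected (upperLimit U K) := by
    refine ⟨let ⟨w, hw⟩ := hLsnd (Classical.arbitrary X); ⟨_, hw⟩, ?_⟩
    refine isPreconnected_upperLimit U K fun χ₀ => ((hU φ).and (hU χ₀)).mono fun χ ⟨hφχ, hχ⟩ =>
      (hCconn χ hφχ).isPreconnected.image_preimage_of_factorsThrough (by fun_prop) (by fun_prop)
        (hχ.prodMap hχ) ((hCA χ hφχ).trans (image_subset_range _ _))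
  obtain ⟨x, hx⟩ := hX _ (isClosed_upperLimit U) hLconn
    (eq_univ_of_forall fun x => let ⟨w, hw⟩ := hLsnd x; ⟨_, hw, rfl⟩)
  exact hBd _ (hLB hx) rfl

end Killing

/-- A subcontinuum `Z` of `Y × Y` projecting onto `Y` either meets the coincidence set of every
level `r n` (and then the diagonal, by compactness), or lies far from the diagonal at some level
`n`; in the second case its image under `R` is a spanning connected set that `R` was chosen to
exclude. -/
theorem SurjectiveSemispanZero.of_levels {X Y : Type*} [TopologicalSpace Y] [CompactSpace Y]
    {p : X → Y} (hp : Surjective p) (r : ℕ → Y → HilbertCube) (hr : ∀ n, Continuous (r n))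
    (hmono : ∀ n, FactorsThrough (r n) (r (n + 1)))
    (hsep : ∀ a b, (∀ n, r n a = r n b) → a = b)
    (hkill : ∀ n m, ∃ R : Y → HilbertCube, Continuous R ∧
      ¬HasSpanningConnectedSet (R ∘ p) (Prod.map (r n ∘ p) (r n ∘ p) ⁻¹' HilbertCube.farPairs m)) :
    SurjectiveSemispanZero Y := by
  intro Z hZ hZc hZsnd
  let E : ℕ → Set (Y × Y) := fun n => Z ∩ {z | r n z.1 = r n z.2}
  by_cases hE : ∀ n, (E n).Nonempty
  · obtain ⟨⟨y, y'⟩, hz⟩ := IsCompact.nonempty_iInter_of_sequence_nonempty_isCompact_isClosed E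
      (fun n => inter_subset_inter_right _ fun z hz => hmono n hz) hE
      (hZ.isCompact.inter_right (isClosed_eq (by fun_prop) (by fun_prop)))
      (fun n => hZ.inter (isClosed_eq (by fun_prop) (by fun_prop)))
    simp only [E, mem_iInter, mem_inter_iff, mem_ofPred_eq] at hz
    obtain rfl := hsep y y' fun n => (hz n).2
    exact ⟨y, (hz 0).1⟩
  obtain ⟨n, hn⟩ := not_forall.mp hE
  have hrn : Continuous (Prod.map (r n) (r n)) := (hr n).prodMap (hr n)
  obtain ⟨m, hm⟩ := (hZ.isCompact.image hrn).exists_subset_farPairs fun _ ⟨z, hz, hzp⟩ h =>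
    hn ⟨z, hz, by rw [← hzp] at h; exact h⟩
  obtain ⟨R, hR, hRm⟩ := hkill n m
  refine (hRm ⟨Prod.map R R '' Z, hZc.image _ (hR.prodMap hR).continuousOn, ?_, ?_⟩).elim
  · rintro _ ⟨⟨y₁, y₂⟩, hz, rfl⟩
    obtain ⟨x₁, rfl⟩ := hp y₁
    obtain ⟨x₂, rfl⟩ := hp y₂
    exact ⟨(x₁, x₂), hm ⟨_, hz, rfl⟩, rfl⟩
  · rw [image_image, show (fun z : Y × Y => (Prod.map R R z).2) = R ∘ Prod.snd from rfl,
      image_comp, hZsnd, image_univ, hp.range_comp]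

theorem exists_surjectiveSemispanZero_range {X : Type*} [TopologicalSpace X] [CompactSpace X]
    [T2Space X] [Nonempty X] (hX : SurjectiveSemispanZero X) (φ₀ : CubeMap X) :
    ∃ (φ : CubeMap X) (r : HilbertCube → HilbertCube), Continuous r ∧ r ∘ φ = φ₀ ∧
      SurjectiveSemispanZero (range φ) := by
  choose kill hle hkill using fun (φ : CubeMap X) (m : ℕ) =>
    exists_le_not_hasSpanningConnectedSet hX φ (HilbertCube.isClosed_farPairs m)
      fun _ => HilbertCube.ne_of_mem_farPairs
  let tower : ℕ → CubeMap X := fun n => (fun φ => CubeMap.combine (kill φ))^[n] φ₀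
  have htower : ∀ n, tower (n + 1) = CubeMap.combine (kill (tower n)) := fun n =>
    iterate_succ_apply' _ n φ₀
  let φ := CubeMap.combine tower
  have hblock : ∀ n, (fun y : range φ => HilbertCube.block n y) ∘ rangeFactorization φ = tower n :=
    fun n => funext (CubeMap.block_combine tower n)
  refine ⟨φ, HilbertCube.block 0, HilbertCube.continuous_block 0, hblock 0, ?_⟩
  have : CompactSpace (range φ) := isCompact_iff_compactSpace.mp (isCompact_range φ.continuous)
  refine SurjectiveSemispanZero.of_levels rangeFactorization_surjective
    (fun n y => HilbertCube.block n y) (fun n => (HilbertCube.continuous_block n).comp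
      continuous_subtype_val) ?_ (fun a b h => Subtype.ext (HilbertCube.eq_of_forall_block_eq h))
    fun n m => ⟨fun y => HilbertCube.block m (HilbertCube.block (n + 1) y), by fun_prop, ?_⟩
  · rintro n ⟨_, x₁, rfl⟩ ⟨_, x₂, rfl⟩ h
    simp only [φ, CubeMap.block_combine, htower] at h ⊢
    exact ((hle (tower n) 0).trans (CubeMap.le_combine _ 0)) h
  · rw [hblock n]
    convert hkill (tower n) m
    funext x
    simp [φ, htower]

def HasChainRefinement {X : Type*} [TopologicalSpace X] (U : Finset (Set X)) : Prop :=
  ∃ (n : ℕ) (V : Fin n → Set X),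
    (∀ i, IsOpen (V i)) ∧ (⋃ i, V i) = Set.univ ∧
    (∀ i, ∃ u ∈ U, V i ⊆ u) ∧
    ∀ i j : Fin n, (V i ∩ V j).Nonempty ↔ |((i : ℕ) : ℤ) - ((j : ℕ) : ℤ)| ≤ 1

theorem HasChainRefinement.of_surjective {X Y : Type*} [TopologicalSpace X] [TopologicalSpace Y]
    {p : X → Y} (hp : Continuous p) (hps : Surjective p) {W : Finset (Set Y)}
    (hW : HasChainRefinement W) {U : Finset (Set X)} (hWU : ∀ w ∈ W, ∃ u ∈ U, p ⁻¹' w ⊆ u) :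
    HasChainRefinement U := by
  obtain ⟨n, V, hVo, hVcov, hVW, hVchain⟩ := hW
  refine ⟨n, fun i => p ⁻¹' V i, fun i => (hVo i).preimage hp, ?_, fun i => ?_, fun i j => ?_⟩
  · rw [← preimage_iUnion, hVcov, preimage_univ]
  · obtain ⟨w, hw, hVw⟩ := hVW i
    obtain ⟨u, hu, hwu⟩ := hWU w hw
    exact ⟨u, hu, (preimage_mono hVw).trans hwu⟩
  · rw [← preimage_inter, hps.nonempty_preimage, hVchain]

theorem Chainable.hasChainRefinement {X Y Z : Type*} [TopologicalSpace X] [TopologicalSpace Y]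
    [TopologicalSpace Z] (hY : Chainable Y) {p : X → Y} (hp : Continuous p) (hps : Surjective p)
    {q : Y → Z} (hq : Continuous q) {W : Finset (Set Z)} (hWo : ∀ w ∈ W, IsOpen w)
    (hW : range q ⊆ ⋃₀ (W : Set (Set Z))) {ψ : X → Z} (hψ : q ∘ p = ψ) {U : Finset (Set X)}
    (hWU : ∀ w ∈ W, ∃ u ∈ U, ψ ⁻¹' w ⊆ u) : HasChainRefinement U := by
  classical
  refine HasChainRefinement.of_surjective hp hps (hY (W.image (q ⁻¹' ·)) ?_ ?_) ?_
  · simp only [Finset.mem_image]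
    rintro _ ⟨w, hw, rfl⟩
    exact (hWo w hw).preimage hq
  · refine eq_univ_of_forall fun y => ?_
    obtain ⟨w, hw, hyw⟩ := hW (mem_range_self y)
    exact ⟨q ⁻¹' w, Finset.mem_image_of_mem _ hw, hyw⟩
  · simp only [Finset.mem_image]
    rintro _ ⟨w, hw, rfl⟩
    rw [← preimage_comp, hψ]
    exact hWU w hw

theorem exists_cubeMap_preimage_refines {X : Type*} [TopologicalSpace X] [CompactSpace X]
    [T2Space X] (U : Finset (Set X)) (hUo : ∀ u ∈ U, IsOpen u)
    (hUcov : ⋃₀ (U : Set (Set X)) = univ) :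
    ∃ (φ : CubeMap X) (W : Finset (Set HilbertCube)), (∀ w ∈ W, IsOpen w) ∧
      range φ ⊆ ⋃₀ (W : Set (Set HilbertCube)) ∧ ∀ w ∈ W, ∃ u ∈ U, φ ⁻¹' w ⊆ u := by
  classical
  let u : ℕ → Set X := fun j => if h : j < U.card then (U.equivFin.symm ⟨j, h⟩ : Set X) else ∅
  have hu : ∀ j, IsOpen (u j) := fun j => by
    by_cases h : j < U.card
    · simpa [u, h] using hUo _ (U.equivFin.symm ⟨j, h⟩).2
    · simp [u, h]
  have hucov : univ ⊆ ⋃ j, u j := fun x _ => by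
    obtain ⟨v, hv, hxv⟩ := mem_sUnion.mp (hUcov.symm ▸ mem_univ x)
    refine mem_iUnion.mpr ⟨U.equivFin ⟨v, hv⟩, ?_⟩
    simpa [u] using hxv
  obtain ⟨f, hf⟩ := PartitionOfUnity.exists_isSubordinate isClosed_univ u hu hucov
  have hfu : ∀ j x, 0 < f j x → x ∈ u j := fun j x hx => hf j (subset_tsupport _ hx.ne')
  refine ⟨⟨fun x j => ⟨f j x, f.nonneg j x, f.le_one j x⟩,
    continuous_pi fun j => (f j).continuous.subtype_mk _⟩,
    (Finset.range U.card).image fun j => {z | 0 < (z j : ℝ)}, ?_, ?_, ?_⟩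
  · simp only [Finset.mem_image]
    rintro _ ⟨j, -, rfl⟩
    exact isOpen_lt continuous_const (by fun_prop)
  · rintro _ ⟨x, rfl⟩
    obtain ⟨j, hj⟩ := f.exists_pos (mem_univ x)
    have hjk : j < U.card := by
      by_contra h
      simpa [u, h] using hfu j x hj
    exact mem_sUnion.mpr ⟨_, Finset.mem_coe.mpr (Finset.mem_image_of_mem _
      (Finset.mem_range.mpr hjk)), hj⟩
  · simp only [Finset.mem_image, Finset.mem_range]
    rintro _ ⟨j, hjk, rfl⟩
    exact ⟨_, (U.equivFin.symm ⟨j, hjk⟩).2, fun x hx => by simpa [u, hjk] using hfu j x hx⟩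

theorem nonmetric_to_metric_counterexample_11 :
    (∃ (X : Type u) (_ : TopologicalSpace X),
      CompactSpace X ∧ T2Space X ∧ ConnectedSpace X ∧ SurjectiveSemispanZero X ∧ ¬ Chainable X) →
    ∃ (Y : Type) (_ : TopologicalSpace Y),
      TopologicalSpace.MetrizableSpace Y ∧
      CompactSpace Y ∧ T2Space Y ∧ ConnectedSpace Y ∧ SurjectiveSemispanZero Y ∧ ¬ Chainable Y := by
  rintro ⟨X, _, _, _, _, hX, hXc⟩
  obtain ⟨U, hUo, hUcov, hU⟩ : ∃ U : Finset (Set X), (∀ u ∈ U, IsOpen u) ∧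
      ⋃₀ (U : Set (Set X)) = univ ∧ ¬HasChainRefinement U := by
    simpa [Chainable, HasChainRefinement] using hXc
  obtain ⟨φ₀, W, hWo, hφ₀W, hWU⟩ := exists_cubeMap_preimage_refines U hUo hUcov
  obtain ⟨φ, r, hr, hrφ, hY⟩ := exists_surjectiveSemispanZero_range hX φ₀
  refine ⟨range φ, inferInstance, inferInstance,
    isCompact_iff_compactSpace.mp (isCompact_range φ.continuous), inferInstance,
    isConnected_iff_connectedSpace.mp (isConnected_range φ.continuous), hY, fun hYc => hU ?_⟩
  refine hYc.hasChainRefinement (p := rangeFactorization φ) (φ.continuous.subtype_mk _)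
    rangeFactorization_surjective (hr.comp continuous_subtype_val) hWo ?_ hrφ hWU
  rintro _ ⟨⟨_, x, rfl⟩, rfl⟩
  exact hφ₀W ⟨x, (congrFun hrφ x).symm⟩
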